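/- Fix a constant M ≥ 2. There exist κ₀ > 0 and N > 1 such that for all κ ∈ (0, κ₀) the following hold, where ρ*_κ = c_κ/√κ and φ*_κ = H_κ(ρ*_κ): (i) for all φ ∈ (0, H_κ(ρ*_κ/M)), N⁻¹·(φ*_κ − φ)^{−1/2} ≤ G_κ(φ) ≤ N·(φ*_κ − φ)^{−1/2}; (ii) for all φ ∈ (H_κ(ρ*_κ/M), φ*_κ), N⁻¹·ρ*_κ ≤ G_κ(φ) ≤ N·ρ*_κ. -/

import Mathlib

/-- `H_κ(ρ) = (c_κ²/2)·(1 − 1/ρ²) − κ·ln ρ`. -/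
noncomputable def Hfun (κ c ρ : ℝ) : ℝ := c ^ 2 / 2 * (1 - 1 / ρ ^ 2) - κ * Real.log ρ

lemma hfun_one (κ c : ℝ) : Hfun κ c 1 = 0 := by simp [Hfun]

lemma hfun_cont (κ c : ℝ) {a b : ℝ} (ha : 0 < a) :
    ContinuousOn (Hfun κ c) (Set.Icc a b) := by
  have hne : ∀ x ∈ Set.Icc a b, x ≠ 0 := fun x hx => by
    have := hx.1; intro h; rw [h] at this; linarith
  unfold Hfun
  apply ContinuousOn.sub
  · apply continuousOn_const.mul
    apply continuousOn_const.sub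
    exact continuousOn_const.div (continuousOn_id.pow 2)
      (fun x hx => pow_ne_zero 2 (hne x hx))
  · exact continuousOn_const.mul (Real.continuousOn_log.mono
      (fun x hx => hne x hx))

lemma hfun_lt (κ cc ρ₁ ρ₂ : ℝ) (hκ : 0 < κ) (h1 : 1 ≤ ρ₁) (h12 : ρ₁ < ρ₂)
    (h2 : ρ₂ ≤ cc / Real.sqrt κ) : Hfun κ cc ρ₁ < Hfun κ cc ρ₂ := by
  have hρ1 : 0 < ρ₁ := by linarith
  have hρ2 : 0 < ρ₂ := by linarith
  have hs : 0 < Real.sqrt κ := Real.sqrt_pos.2 hκ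
  have hsc : ρ₂ * Real.sqrt κ ≤ cc := (le_div_iff₀ hs).1 h2
  have h0 : 0 ≤ ρ₂ * Real.sqrt κ := by positivity
  have hκρ : κ * ρ₂ ^ 2 ≤ cc ^ 2 := by
    have h00 := mul_le_mul hsc hsc h0 (le_trans h0 hsc)
    nlinarith [Real.sq_sqrt hκ.le, h00]
  have hlog : Real.log ρ₂ - Real.log ρ₁ < ρ₂ / ρ₁ - 1 := by
    have h := Real.log_lt_sub_one_of_pos (div_pos hρ2 hρ1)
      (ne_of_gt ((one_lt_div hρ1).2 h12))
    rwa [Real.log_div hρ2.ne' hρ1.ne'] at h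
  have key : κ * (Real.log ρ₂ - Real.log ρ₁) < κ * (ρ₂ / ρ₁ - 1) :=
    mul_lt_mul_of_pos_left hlog hκ
  have frac : κ * (ρ₂ / ρ₁ - 1) ≤ cc ^ 2 / 2 * (1 / ρ₁ ^ 2 - 1 / ρ₂ ^ 2) := by
    rw [← sub_nonneg]
    have expand : cc ^ 2 / 2 * (1 / ρ₁ ^ 2 - 1 / ρ₂ ^ 2) - κ * (ρ₂ / ρ₁ - 1)
        = (cc ^ 2 * (ρ₂ ^ 2 - ρ₁ ^ 2) * ρ₁ - 2 * κ * (ρ₂ - ρ₁) * ρ₁ ^ 2 * ρ₂ ^ 2)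
          / (2 * ρ₁ ^ 3 * ρ₂ ^ 2) := by
      field_simp
    rw [expand]
    apply div_nonneg _ (by positivity)
    nlinarith [mul_nonneg (mul_nonneg (mul_nonneg hρ1.le (sub_nonneg.2 h12.le))
        (by linarith : (0:ℝ) ≤ ρ₂ + ρ₁)) (sub_nonneg.2 hκρ),
      mul_nonneg (mul_nonneg (mul_nonneg hκ.le (sq_nonneg ρ₂)) hρ1.le)
        (sq_nonneg (ρ₂ - ρ₁))]
  unfold Hfun
  nlinarith [key, frac]

lemma c_lt_six (κ cc : ℝ) (hκ : 0 < κ) (hκ1 : κ ≤ 1/100) (hc1 : 1 < cc)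
    (heq : cc ^ κ * ((cc - Real.sqrt κ) ^ 2 + 1)
      = Real.exp ((cc ^ 2 - κ) / 2) * κ ^ (κ / 2)) : cc < 6 := by
  by_contra h
  push_neg at h
  have hcpos : 0 < cc := by linarith
  have hsk : Real.sqrt κ ≤ 1 := by
    rw [show (1:ℝ) = Real.sqrt 1 by simp]
    exact Real.sqrt_le_sqrt (by linarith)
  have h1 : (cc - Real.sqrt κ) ^ 2 + 1 ≤ cc ^ 2 + 1 := by
    nlinarith [Real.sqrt_nonneg κ]
  have hlogκ : -1 ≤ κ * Real.log κ := by
    have hl := Real.log_le_sub_one_of_pos (inv_pos.2 hκ)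
    rw [Real.log_inv] at hl
    have := mul_le_mul_of_nonneg_left hl hκ.le
    have hinv : κ * κ⁻¹ = 1 := mul_inv_cancel₀ hκ.ne'
    nlinarith
  have h2 : Real.exp (-(1/2) : ℝ) ≤ κ ^ (κ/2) := by
    rw [Real.rpow_def_of_pos hκ]
    apply Real.exp_le_exp.2
    nlinarith
  have h3 : cc ^ κ ≤ Real.exp (κ * cc) := by
    rw [Real.rpow_def_of_pos hcpos]
    apply Real.exp_le_exp.2
    have := Real.log_le_sub_one_of_pos hcpos
    nlinarith
  have hcκpos : 0 < cc ^ κ := Real.rpow_pos_of_pos hcpos κ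
  set E : ℝ := (cc ^ 2 - κ)/2 - 1/2 - κ * cc with hEdef
  have step : Real.exp E * cc ^ κ ≤ Real.exp ((cc ^ 2 - κ)/2) * κ ^ (κ/2) := by
    calc Real.exp E * cc ^ κ ≤ Real.exp E * Real.exp (κ * cc) :=
          mul_le_mul_of_nonneg_left h3 (Real.exp_pos _).le
      _ = Real.exp ((cc ^ 2 - κ)/2) * Real.exp (-(1/2)) := by
          rw [← Real.exp_add, ← Real.exp_add, hEdef]; ring_nf
      _ ≤ Real.exp ((cc ^ 2 - κ)/2) * κ ^ (κ/2) :=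
          mul_le_mul_of_nonneg_left h2 (Real.exp_pos _).le
  have hEle : Real.exp E ≤ cc ^ 2 + 1 := by
    have h4 : Real.exp E * cc ^ κ ≤ cc ^ κ * (cc ^ 2 + 1) := by
      calc Real.exp E * cc ^ κ ≤ cc ^ κ * ((cc - Real.sqrt κ) ^ 2 + 1) := by
            rw [heq]; exact step
        _ ≤ cc ^ κ * (cc ^ 2 + 1) := mul_le_mul_of_nonneg_left h1 hcκpos.le
    nlinarith [h4, hcκpos]
  have hE : 2 * cc ≤ E := by
    have := mul_le_mul_of_nonneg_right hκ1 hcpos.le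
    rw [hEdef]
    nlinarith [mul_nonneg (by linarith : (0:ℝ) ≤ cc - 6) hcpos.le]
  have hmono : Real.exp (cc) * Real.exp (cc) ≤ Real.exp E := by
    rw [← Real.exp_add]
    exact Real.exp_le_exp.2 (by linarith)
  have haoe := Real.add_one_le_exp cc
  nlinarith [hmono, hEle, haoe, Real.exp_pos cc]

lemma bound_ub (κ ρ s L : ℝ) (hκ : 0 < κ) (hL : 0 ≤ L) :
    ρ^2 * (κ/2*s^2 - κ/2 - κ*L) ≤ κ*(ρ*s)^2/2 := by
  nlinarith [mul_nonneg (mul_nonneg hκ.le (sq_nonneg ρ)) hL,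
    mul_nonneg hκ.le (sq_nonneg ρ)]

lemma bound_lb (κ ρ s L : ℝ) (hκ : 0 < κ) (hs : 2 ≤ s) (hL : L ≤ s - 1) :
    κ*(ρ*s)^2/8 ≤ ρ^2 * (κ/2*s^2 - κ/2 - κ*L) := by
  nlinarith [mul_nonneg (mul_nonneg hκ.le (sq_nonneg ρ)) (sub_nonneg.2 hL),
    mul_nonneg (mul_nonneg hκ.le (sq_nonneg ρ))
      (mul_nonneg (by linarith : (0:ℝ) ≤ 3*s-2) (by linarith : (0:ℝ) ≤ s - 2))]

lemma aux_pos (ρ y cc : ℝ) (h : cc^2/8 ≤ ρ^2*y) (hc : 1 ≤ cc) : 0 < y := by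
  by_contra hy
  push_neg at hy
  have h1 : ρ^2 * y ≤ 0 := mul_nonpos_of_nonneg_of_nonpos (sq_nonneg ρ) hy
  nlinarith

lemma aux_up (a cc : ℝ) (h0 : 0 ≤ a) (h : a^2 ≤ cc^2/2) (hc : cc < 6) (hc0 : 0 < cc) :
    a ≤ 5 := by nlinarith

lemma aux_low (a cc : ℝ) (h0 : 0 ≤ a) (h : cc^2/8 ≤ a^2) (hc : 1 ≤ cc) :
    (1:ℝ)/8 ≤ a := by nlinarith

set_option maxHeartbeats 1000000 in
/-- two-sided bounds on `G_κ` near and away from `φ*_κ = H_κ(ρ*_κ)`,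
with `ρ*_κ = c_κ/√κ`.  Here `c κ = c_κ` and `G κ` is the inverse of the restriction of
`H_κ` to `[1, c_κ/√κ]`. -/
theorem stmt18 (M : ℝ) (hM : 2 ≤ M) (c : ℝ → ℝ)
    (hck : ∀ κ : ℝ, 0 < κ → Real.sqrt (1 + κ) < c κ ∧
      (c κ) ^ κ * ((c κ - Real.sqrt κ) ^ 2 + 1)
        = Real.exp (((c κ) ^ 2 - κ) / 2) * κ ^ (κ / 2))
    (G : ℝ → ℝ → ℝ)
    (hGk : ∀ κ : ℝ, 0 < κ → ∀ ρ : ℝ, 1 ≤ ρ → ρ ≤ c κ / Real.sqrt κ →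
      G κ (Hfun κ (c κ) ρ) = ρ) :
    ∃ κ₀ > (0:ℝ), ∃ N : ℝ, 1 < N ∧ ∀ κ : ℝ, 0 < κ → κ < κ₀ →
      (∀ x : ℝ, 0 < x → x < Hfun κ (c κ) (c κ / Real.sqrt κ / M) →
        N⁻¹ * (Hfun κ (c κ) (c κ / Real.sqrt κ) - x) ^ (-(1:ℝ) / 2) ≤ G κ x ∧
        G κ x ≤ N * (Hfun κ (c κ) (c κ / Real.sqrt κ) - x) ^ (-(1:ℝ) / 2)) ∧
      (∀ x : ℝ, Hfun κ (c κ) (c κ / Real.sqrt κ / M) < x →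
          x < Hfun κ (c κ) (c κ / Real.sqrt κ) →
        N⁻¹ * (c κ / Real.sqrt κ) ≤ G κ x ∧ G κ x ≤ N * (c κ / Real.sqrt κ)) := by
  have hM0 : (0:ℝ) < M := by linarith
  refine ⟨min (1/100) (1/M^2), by positivity, M + 6, by linarith, ?_⟩
  intro κ hκ hκ0
  obtain ⟨hc1', hceq⟩ := hck κ hκ
  set N : ℝ := M + 6 with hNdef
  have hN8 : (8:ℝ) ≤ N := by rw [hNdef]; linarith
  have hκ100 : κ ≤ 1/100 := le_of_lt (lt_of_lt_of_le hκ0 (min_le_left _ _))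
  have hκM : κ < 1/M^2 := lt_of_lt_of_le hκ0 (min_le_right _ _)
  have hc1 : 1 < c κ := lt_of_le_of_lt (Real.one_le_sqrt.2 (by linarith)) hc1'
  have hc6 : c κ < 6 := c_lt_six κ (c κ) hκ hκ100 hc1 hceq
  have hs : 0 < Real.sqrt κ := Real.sqrt_pos.2 hκ
  set R := c κ / Real.sqrt κ with hRdef
  have hR0 : 0 < R := div_pos (by linarith) hs
  have hsM : Real.sqrt κ < 1/M := by
    refine (Real.sqrt_lt' (by positivity)).2 ?_
    rw [div_pow, one_pow]
    linarith
  have hMR : M < R := by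
    have h1 : M < 1/Real.sqrt κ := by
      rw [lt_div_iff₀ hs]
      nlinarith [mul_lt_mul_of_pos_left hsM hM0, mul_one_div_cancel hM0.ne']
    have h2 : 1/Real.sqrt κ ≤ R := by
      rw [hRdef]
      exact (div_le_div_iff_of_pos_right hs).2 hc1.le
    linarith
  have hRM1 : 1 < R/M := (one_lt_div hM0).2 hMR
  have hRMR : R/M < R := div_lt_self hR0 (by linarith)
  have hRM2 : R/M ≤ R/2 := by
    rw [div_le_div_iff₀ hM0 (by norm_num)]
    nlinarith
  have hcc2 : (c κ)^2 = κ * R^2 := by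
    rw [hRdef, div_pow, Real.sq_sqrt hκ.le]
    field_simp
  have hdiff : ∀ ρ : ℝ, 0 < ρ → Hfun κ (c κ) R - Hfun κ (c κ) ρ
      = κ/2 * (R/ρ)^2 - κ/2 - κ * Real.log (R/ρ) := by
    intro ρ hρ
    rw [Real.log_div hR0.ne' hρ.ne']
    unfold Hfun
    rw [hcc2]
    field_simp
    ring
  have hHRM : Hfun κ (c κ) (R/M) < Hfun κ (c κ) R :=
    hfun_lt κ (c κ) (R/M) R hκ hRM1.le hRMR (hRdef ▸ le_refl R)
  constructor
  · -- region (i)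
    intro x hx0 hx1
    have hxmem : x ∈ Set.Icc (Hfun κ (c κ) 1) (Hfun κ (c κ) (R/M)) := by
      rw [hfun_one]; exact ⟨hx0.le, hx1.le⟩
    obtain ⟨ρ, hρmem, hρx⟩ :=
      intermediate_value_Icc hRM1.le (hfun_cont κ (c κ) one_pos) hxmem
    obtain ⟨hρ1, hρRM⟩ := hρmem
    have hρ0 : 0 < ρ := by linarith
    have hρR : ρ ≤ R := le_trans hρRM hRMR.le
    have hG : G κ x = ρ := by rw [← hρx]; exact hGk κ hκ ρ hρ1 (hRdef ▸ hρR)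
    set y := Hfun κ (c κ) R - x with hydef
    have hs2 : 2 ≤ R/ρ := by
      rw [le_div_iff₀ hρ0]
      linarith
    have hs1 : 1 ≤ R/ρ := by linarith
    have hlogs0 : 0 ≤ Real.log (R/ρ) := Real.log_nonneg hs1
    have hlogs1 : Real.log (R/ρ) ≤ R/ρ - 1 :=
      Real.log_le_sub_one_of_pos (by positivity)
    have hyval : y = κ/2*(R/ρ)^2 - κ/2 - κ*Real.log (R/ρ) := by
      rw [hydef, ← hρx, hdiff ρ hρ0]
    have hρs : ρ * (R/ρ) = R := by field_simp
    have hρs2 : ρ^2*(R/ρ)^2 = R^2 := by rw [← mul_pow, hρs]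
    have hub : ρ^2 * y ≤ (c κ)^2 / 2 := by
      have h := bound_ub κ ρ (R/ρ) (Real.log (R/ρ)) hκ hlogs0
      rw [hρs] at h
      rw [hyval, hcc2]
      linarith
    have hlb : (c κ)^2 / 8 ≤ ρ^2 * y := by
      have h := bound_lb κ ρ (R/ρ) (Real.log (R/ρ)) hκ hs2 hlogs1
      rw [hρs] at h
      rw [hyval, hcc2]
      linarith
    have hy0 : 0 < y := aux_pos ρ y (c κ) hlb hc1.le
    have hrpow : y ^ (-(1:ℝ)/2) = (Real.sqrt y)⁻¹ := by
      rw [show (-(1:ℝ)/2) = -(1/2) by norm_num, Real.rpow_neg hy0.le, ← Real.sqrt_eq_rpow]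
    set t := Real.sqrt y with htdef
    have ht0 : 0 < t := Real.sqrt_pos.2 hy0
    have ht2 : t^2 = y := Real.sq_sqrt hy0.le
    have hρt2 : (ρ*t)^2 = ρ^2*y := by rw [mul_pow, ht2]
    have hρt0 : 0 ≤ ρ*t := by positivity
    have hup : ρ*t ≤ 5 := aux_up (ρ*t) (c κ) hρt0 (by rw [hρt2]; exact hub) hc6 (by linarith)
    have hlow : (1:ℝ)/8 ≤ ρ*t := aux_low (ρ*t) (c κ) hρt0 (by rw [hρt2]; exact hlb) hc1.le
    constructor
    · rw [hG, hrpow, show N⁻¹ * t⁻¹ = N⁻¹/t from (div_eq_mul_inv _ _).symm,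
        div_le_iff₀ ht0]
      have hNi : N⁻¹ ≤ (8:ℝ)⁻¹ := inv_anti₀ (by norm_num) hN8
      have : ((8:ℝ))⁻¹ = 1/8 := by norm_num
      linarith
    · rw [hG, hrpow, show N * t⁻¹ = N/t from (div_eq_mul_inv _ _).symm,
        le_div_iff₀ ht0]
      linarith
  · -- region (ii)
    intro x hx1 hx2
    have hxmem : x ∈ Set.Icc (Hfun κ (c κ) (R/M)) (Hfun κ (c κ) R) := ⟨hx1.le, hx2.le⟩
    obtain ⟨ρ, hρmem, hρx⟩ :=
      intermediate_value_Icc hRMR.le (hfun_cont κ (c κ) (by linarith : (0:ℝ) < R/M)) hxmem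
    obtain ⟨hρl, hρr⟩ := hρmem
    have hρ1 : (1:ℝ) ≤ ρ := le_trans hRM1.le hρl
    have hG : G κ x = ρ := by rw [← hρx]; exact hGk κ hκ ρ hρ1 (hRdef ▸ hρr)
    constructor
    · rw [hG, inv_mul_eq_div]
      have hNM : R/N ≤ R/M := div_le_div_of_nonneg_left hR0.le hM0 (by linarith)
      linarith
    · rw [hG]
      have : R ≤ N*R := le_mul_of_one_le_left hR0.le (by linarith)
      linarith
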